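/- arXiv:1603.03471 — 5 statements merged into one kernel-verified Lean document; each statement's English description precedes it below -/
import Mathlib

section
/- The set of 3×3 integer matrices M with det M = 1 such that q₃(M·v) = q₃(v) for every v ∈ ℤ³ has exactly 24 elements, where q₃(n,p,q) = n² + p² + q² + np + nq + pq. -/
/-- The quadratic form of the tetrahedral lattice `S₃`:
`q₃(n,p,q) = n² + p² + q² + np + nq + pq`. -/
def q3 (v : Fin 3 → ℤ) : ℤ :=
  (v 0) ^ 2 + (v 1) ^ 2 + (v 2) ^ 2 + v 0 * v 1 + v 0 * v 2 + v 1 * v 2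

/-- The 12 vectors of squared length 1 in the lattice. -/
def cols : Fin 12 → (Fin 3 → ℤ) :=
  ![![1,0,0], ![0,1,0], ![0,0,1], ![-1,0,0], ![0,-1,0], ![0,0,-1],
    ![1,-1,0], ![1,0,-1], ![0,1,-1], ![-1,1,0], ![-1,0,1], ![0,-1,1]]

def toM (k : Fin 3 → Fin 12) : Matrix (Fin 3) (Fin 3) ℤ := fun i j => cols (k j) i

def Q (M : Matrix (Fin 3) (Fin 3) ℤ) : Prop :=
  (M 0 0 * M 1 1 * M 2 2 - M 0 0 * M 1 2 * M 2 1 - M 0 1 * M 1 0 * M 2 2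
    + M 0 1 * M 1 2 * M 2 0 + M 0 2 * M 1 0 * M 2 1 - M 0 2 * M 1 1 * M 2 0 = 1) ∧
  q3 (fun i => M i 0 + M i 1) = 3 ∧ q3 (fun i => M i 0 + M i 2) = 3 ∧
  q3 (fun i => M i 1 + M i 2) = 3

instance : DecidablePred Q := fun M => by unfold Q; infer_instance

set_option maxRecDepth 100000 in
set_option maxHeartbeats 4000000 in
theorem hcount : (Finset.univ.filter (fun k : Fin 3 → Fin 12 => Q (toM k))).card = 24 := by
  decide

lemma cols_inj : Function.Injective cols := by decide

lemma toM_inj : Function.Injective toM := by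
  intro k k' h
  funext j
  apply cols_inj
  funext i
  exact congrFun (congrFun h i) j

lemma q3_cols (m : Fin 12) : q3 (cols m) = 1 := by fin_cases m <;> decide

lemma preserve (M : Matrix (Fin 3) (Fin 3) ℤ)
    (h1 : q3 (fun i => M i 0) = 1) (h2 : q3 (fun i => M i 1) = 1)
    (h3 : q3 (fun i => M i 2) = 1)
    (h4 : q3 (fun i => M i 0 + M i 1) = 3) (h5 : q3 (fun i => M i 0 + M i 2) = 3)
    (h6 : q3 (fun i => M i 1 + M i 2) = 3) (v : Fin 3 → ℤ) :
    q3 (M.mulVec v) = q3 v := by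
  simp only [q3, Matrix.mulVec, dotProduct, Fin.sum_univ_three] at *
  linear_combination ((v 0)^2 - v 0 * v 1 - v 0 * v 2) * h1
    + ((v 1)^2 - v 0 * v 1 - v 1 * v 2) * h2 + ((v 2)^2 - v 0 * v 2 - v 1 * v 2) * h3
    + (v 0 * v 1) * h4 + (v 0 * v 2) * h5 + (v 1 * v 2) * h6

lemma mem_cols (a b c : ℤ) (h : a^2 + b^2 + c^2 + a*b + a*c + b*c = 1) :
    ∃ m, cols m = ![a,b,c] := by
  have ha : -1 ≤ a ∧ a ≤ 1 := by
    constructor <;> nlinarith [sq_nonneg (a+2*b+c), sq_nonneg (a+b+2*c), sq_nonneg (b+c),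
      sq_nonneg b, sq_nonneg c, sq_nonneg (b-c)]
  have hb : -1 ≤ b ∧ b ≤ 1 := by
    constructor <;> nlinarith [sq_nonneg (2*a+b+c), sq_nonneg (a+b+2*c), sq_nonneg (a+c),
      sq_nonneg a, sq_nonneg c, sq_nonneg (a-c)]
  have hc : -1 ≤ c ∧ c ≤ 1 := by
    constructor <;> nlinarith [sq_nonneg (2*a+b+c), sq_nonneg (a+2*b+c), sq_nonneg (a+b),
      sq_nonneg a, sq_nonneg b, sq_nonneg (a-b)]
  obtain ⟨ha1, ha2⟩ := ha
  obtain ⟨hb1, hb2⟩ := hb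
  obtain ⟨hc1, hc2⟩ := hc
  interval_cases a <;> interval_cases b <;> interval_cases c <;>
    first
      | decide
      | (exfalso; norm_num at h)

/-- There are exactly 24 integer 3×3 matrices of determinant 1 preserving `q₃`. -/
theorem stmt4 :
    {M : Matrix (Fin 3) (Fin 3) ℤ |
      M.det = 1 ∧ ∀ v : Fin 3 → ℤ, q3 (M.mulVec v) = q3 v}.ncard = 24 := by
  have hset : {M : Matrix (Fin 3) (Fin 3) ℤ |
      M.det = 1 ∧ ∀ v : Fin 3 → ℤ, q3 (M.mulVec v) = q3 v} =
      ↑((Finset.univ.filter (fun k : Fin 3 → Fin 12 => Q (toM k))).image toM) := by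
    ext M
    simp only [Set.mem_setOf_eq, Finset.coe_image, Set.mem_image, Finset.mem_coe,
      Finset.mem_filter, Finset.mem_univ, true_and]
    constructor
    · rintro ⟨hdet, hq⟩
      have mv : ∀ w : Fin 3 → ℤ, M.mulVec w = fun i => M i 0 * w 0 + M i 1 * w 1 + M i 2 * w 2 := by
        intro w
        funext i
        simp [Matrix.mulVec, dotProduct, Fin.sum_univ_three]
      have c0 : q3 (fun i => M i 0) = 1 := by
        have h := hq ![1,0,0]; rw [mv] at h
        simpa [q3] using h
      have c1 : q3 (fun i => M i 1) = 1 := by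
        have h := hq ![0,1,0]; rw [mv] at h
        simpa [q3] using h
      have c2 : q3 (fun i => M i 2) = 1 := by
        have h := hq ![0,0,1]; rw [mv] at h
        simpa [q3] using h
      have p01 : q3 (fun i => M i 0 + M i 1) = 3 := by
        have h := hq ![1,1,0]; rw [mv] at h
        simpa [q3] using h
      have p02 : q3 (fun i => M i 0 + M i 2) = 3 := by
        have h := hq ![1,0,1]; rw [mv] at h
        simpa [q3] using h
      have p12 : q3 (fun i => M i 1 + M i 2) = 3 := by
        have h := hq ![0,1,1]; rw [mv] at h
        simpa [q3] using h
      simp only [q3] at c0 c1 c2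
      obtain ⟨m0, hm0⟩ := mem_cols _ _ _ c0
      obtain ⟨m1, hm1⟩ := mem_cols _ _ _ c1
      obtain ⟨m2, hm2⟩ := mem_cols _ _ _ c2
      have hMk : toM ![m0, m1, m2] = M := by
        funext i j
        fin_cases j <;> fin_cases i <;> simp [toM, hm0, hm1, hm2]
      have hQ : Q M := by
        refine ⟨?_, p01, p02, p12⟩
        rw [Matrix.det_fin_three] at hdet
        linear_combination hdet
      exact ⟨![m0, m1, m2], by rw [hMk]; exact hQ, hMk⟩
    · rintro ⟨k, hk, rfl⟩
      obtain ⟨hdet, h4, h5, h6⟩ := hk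
      have hcol : ∀ j, q3 (fun i => toM k i j) = 1 := fun j => q3_cols (k j)
      refine ⟨?_, preserve _ (hcol 0) (hcol 1) (hcol 2) h4 h5 h6⟩
      rw [Matrix.det_fin_three]
      linear_combination hdet
  rw [hset, Set.ncard_coe_finset, Finset.card_image_of_injective _ toM_inj, hcount]
end

section
/- On the forward cone C₀⁺ = {u ∈ ℤ⁴ : u⁰ ≥ 0 and Q₄(u) ≥ 0}, the relation u < v defined by u⁰ < v⁰ and Q₄(v − u) ≥ 0 is a strict partial order: it is irreflexive and transitive. -/
/-- The indefinite Minkowski norm squared on `S₄ = ℤ⁴`: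
`Q₄(u) = (u⁰)² − q₃(u¹,u²,u³)`. -/
def Q4 (u : Fin 4 → ℤ) : ℤ :=
  (u 0) ^ 2 - ((u 1) ^ 2 + (u 2) ^ 2 + (u 3) ^ 2 + u 1 * u 2 + u 1 * u 3 + u 2 * u 3)

/-- The forward cone `C₀⁺ = {u : u⁰ ≥ 0, Q₄(u) ≥ 0}`. -/
def C0 : Set (Fin 4 → ℤ) := {u | 0 ≤ u 0 ∧ 0 ≤ Q4 u}

/-- The causal order: `u < v` iff `u⁰ < v⁰` and `Q₄(v − u) ≥ 0`. -/
def causalLT (u v : Fin 4 → ℤ) : Prop := u 0 < v 0 ∧ 0 ≤ Q4 (v - u)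

/-- `v` is a child of `u` (`u ⋖ v`): `u < v` with no vertex of `C₀⁺` strictly between. -/
def covers (u v : Fin 4 → ℤ) : Prop :=
  causalLT u v ∧ ¬∃ w ∈ C0, causalLT u w ∧ causalLT w v

/-- Superadditivity of `Q₄` on the forward cone (reverse Cauchy–Schwarz). -/
lemma key (a0 a1 a2 a3 b0 b1 b2 b3 : ℤ) (ha : 0 ≤ a0) (hb : 0 ≤ b0)
    (hqa : a1^2+a2^2+a3^2+a1*a2+a1*a3+a2*a3 ≤ a0^2)
    (hqb : b1^2+b2^2+b3^2+b1*b2+b1*b3+b2*b3 ≤ b0^2) :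
    (a1+b1)^2+(a2+b2)^2+(a3+b3)^2+(a1+b1)*(a2+b2)+(a1+b1)*(a3+b3)+(a2+b2)*(a3+b3)
      ≤ (a0+b0)^2 := by
  nlinarith [sq_nonneg ((a1+a2)*(b1+b3)-(a1+a3)*(b1+b2)),
    sq_nonneg ((a1+a2)*(b2+b3)-(a2+a3)*(b1+b2)),
    sq_nonneg ((a1+a3)*(b2+b3)-(a2+a3)*(b1+b3)),
    mul_nonneg ha hb, mul_nonneg (mul_nonneg ha hb) (mul_nonneg ha hb),
    sq_nonneg (a0*b0 - ((a1+a2)*(b1+b2)+(a1+a3)*(b1+b3)+(a2+a3)*(b2+b3))/2),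
    mul_le_mul hqa hqb (by nlinarith [sq_nonneg (b1+b2), sq_nonneg (b1+b3), sq_nonneg (b2+b3)]) (sq_nonneg a0)]

/-- The causal relation is a strict partial order on the forward cone:
irreflexive and transitive. -/
theorem stmt6 :
    (∀ u ∈ C0, ¬causalLT u u) ∧
    (∀ u ∈ C0, ∀ v ∈ C0, ∀ w ∈ C0, causalLT u v → causalLT v w → causalLT u w) := by
  constructor
  · intro u _ h
    exact lt_irrefl _ h.1
  · intro u _ v _ w _ huv hvw
    refine ⟨huv.1.trans hvw.1, ?_⟩
    have h1 := huv.2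
    have h2 := hvw.2
    simp only [Q4, Pi.sub_apply, sub_nonneg] at h1 h2 ⊢
    have := key (v 0 - u 0) (v 1 - u 1) (v 2 - u 2) (v 3 - u 3)
      (w 0 - v 0) (w 1 - v 1) (w 2 - v 2) (w 3 - v 3)
      (by linarith [huv.1]) (by linarith [hvw.1]) (by linarith) (by linarith)
    have e : ∀ i : Fin 4, v i - u i + (w i - v i) = w i - u i := fun i => by ring
    rw [e 1, e 2, e 3, e 0] at this
    linarith
end

section
/- For u, v in the forward cone C₀⁺, there exists a path from u to v (a finite sequence u = w₁ ⋖ w₂ ⋖ ⋯ ⋖ wₙ = v with n ≥ 2, each step a covering of the causal order) if and only if u < v. -/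
set_option maxHeartbeats 1000000

lemma scalar_key (a0 a1 a2 a3 b0 b1 b2 b3 : ℤ) (ha0 : 0 < a0) (hb0 : 0 < b0)
    (ha : 0 ≤ a0 ^ 2 - (a1 ^ 2 + a2 ^ 2 + a3 ^ 2 + a1 * a2 + a1 * a3 + a2 * a3))
    (hb : 0 ≤ b0 ^ 2 - (b1 ^ 2 + b2 ^ 2 + b3 ^ 2 + b1 * b2 + b1 * b3 + b2 * b3)) :
    0 ≤ (a0 + b0) ^ 2 - ((a1 + b1) ^ 2 + (a2 + b2) ^ 2 + (a3 + b3) ^ 2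
      + (a1 + b1) * (a2 + b2) + (a1 + b1) * (a3 + b3) + (a2 + b2) * (a3 + b3)) := by
  obtain ⟨p1, p2, p3, q1, q2, q3, e1, e2, e3, f1, f2, f3⟩ :
      ∃ p1 p2 p3 q1 q2 q3 : ℤ, p1 = a1 + a2 ∧ p2 = a1 + a3 ∧ p3 = a2 + a3 ∧
        q1 = b1 + b2 ∧ q2 = b1 + b3 ∧ q3 = b2 + b3 := ⟨_,_,_,_,_,_,rfl,rfl,rfl,rfl,rfl,rfl⟩
  have hA : p1^2 + p2^2 + p3^2 ≤ 2 * a0^2 := by subst e1 e2 e3; nlinarith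
  have hB : q1^2 + q2^2 + q3^2 ≤ 2 * b0^2 := by subst f1 f2 f3; nlinarith
  have cs : (p1*q1 + p2*q2 + p3*q3)^2 ≤ (p1^2+p2^2+p3^2) * (q1^2+q2^2+q3^2) := by
    nlinarith [sq_nonneg (p1*q2 - p2*q1), sq_nonneg (p1*q3 - p3*q1), sq_nonneg (p2*q3 - p3*q2)]
  have h1 : (p1*q1 + p2*q2 + p3*q3)^2 ≤ (2 * a0 * b0)^2 := by
    calc (p1*q1 + p2*q2 + p3*q3)^2 ≤ (p1^2+p2^2+p3^2) * (q1^2+q2^2+q3^2) := cs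
      _ ≤ (2 * a0^2) * (2 * b0^2) := mul_le_mul hA hB (by positivity) (by positivity)
      _ = (2 * a0 * b0)^2 := by ring
  have h2 : p1*q1 + p2*q2 + p3*q3 ≤ 2 * a0 * b0 := by
    nlinarith [mul_pos ha0 hb0]
  subst e1 e2 e3 f1 f2 f3
  nlinarith [h2]

lemma q4_add (a b : Fin 4 → ℤ) (ha0 : 0 < a 0) (hb0 : 0 < b 0)
    (ha : 0 ≤ Q4 a) (hb : 0 ≤ Q4 b) : 0 ≤ Q4 (a + b) := by
  simpa [Q4] using scalar_key (a 0) (a 1) (a 2) (a 3) (b 0) (b 1) (b 2) (b 3) ha0 hb0 ha hb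

lemma causal_trans {u w v : Fin 4 → ℤ} (h1 : causalLT u w) (h2 : causalLT w v) :
    causalLT u v := by
  refine ⟨h1.1.trans h2.1, ?_⟩
  have e : v - u = (w - u) + (v - w) := by abel
  rw [e]
  exact q4_add _ _ (by simpa using sub_pos.mpr h1.1) (by simpa using sub_pos.mpr h2.1) h1.2 h2.2

/-- the covering relation restricted to `C0` -/
def R (a b : Fin 4 → ℤ) : Prop := a ∈ C0 ∧ b ∈ C0 ∧ covers a b

lemma trans_to_path (u v : Fin 4 → ℤ) (h : Relation.TransGen R u v) :
    ∃ n : ℕ, ∃ w : Fin (n + 2) → (Fin 4 → ℤ),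
      (∀ i, w i ∈ C0) ∧ w 0 = u ∧ w (Fin.last (n + 1)) = v ∧
      ∀ i : Fin (n + 1), covers (w i.castSucc) (w i.succ) := by
  induction h with
  | single h =>
    exact ⟨0, ![u, _], by intro i; fin_cases i <;> simp [h.1, h.2.1], rfl, rfl, by
      intro i; fin_cases i; simpa using h.2.2⟩
  | tail _ hstep ih =>
    rename_i b c _
    obtain ⟨n, w, hC, h0, hl, hcov⟩ := ih
    refine ⟨n + 1, Fin.snoc w c, ?_, ?_, ?_, ?_⟩
    · intro i
      refine Fin.lastCases ?_ (fun j => ?_) i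
      · simpa using hstep.2.1
      · simpa using hC j
    · have e : (0 : Fin (n + 3)) = Fin.castSucc 0 := rfl
      rw [e, Fin.snoc_castSucc]; exact h0
    · simp
    · intro i
      refine Fin.lastCases ?_ (fun j => ?_) i
      · have e1 : (Fin.last (n + 1)).castSucc = Fin.castSucc (Fin.last (n + 1)) := rfl
        rw [Fin.succ_last, e1, Fin.snoc_castSucc, Fin.snoc_last, hl]
        exact hstep.2.2
      · rw [Fin.succ_castSucc, Fin.snoc_castSucc, Fin.snoc_castSucc]
        exact hcov j

lemma causal_to_trans : ∀ k : ℕ, ∀ u v : Fin 4 → ℤ, u ∈ C0 → v ∈ C0 → causalLT u v →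
    (v 0 - u 0).toNat ≤ k → Relation.TransGen R u v := by
  intro k
  induction k with
  | zero => intro u v _ _ h hle; exfalso; have := h.1; omega
  | succ k ih =>
    intro u v hu hv h hle
    by_cases hc : covers u v
    · exact Relation.TransGen.single ⟨hu, hv, hc⟩
    · have hex : ∃ w ∈ C0, causalLT u w ∧ causalLT w v :=
        not_not.mp ((not_and_or.mp hc).resolve_left (not_not_intro h))
      obtain ⟨w, hw, h1, h2⟩ := hex
      have k1 : (w 0 - u 0).toNat ≤ k := by have := h1.1; have := h2.1; omega
      have k2 : (v 0 - w 0).toNat ≤ k := by have := h1.1; have := h2.1; omega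
      exact (ih u w hu hw h1 k1).trans (ih w v hw hv h2 k2)

/-- There exists a path of covering steps in `C₀⁺` from `u` to `v`
iff `u < v` in the causal order. -/
theorem stmt7 (u v : Fin 4 → ℤ) (hu : u ∈ C0) (hv : v ∈ C0) :
    (∃ n : ℕ, ∃ w : Fin (n + 2) → (Fin 4 → ℤ),
      (∀ i, w i ∈ C0) ∧ w 0 = u ∧ w (Fin.last (n + 1)) = v ∧
      ∀ i : Fin (n + 1), covers (w i.castSucc) (w i.succ)) ↔ causalLT u v := by
  constructor
  · rintro ⟨n, w, _, h0, hl, hcov⟩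
    have key : ∀ i : Fin (n + 2), i = 0 ∨ causalLT (w 0) (w i) := by
      intro i
      induction i using Fin.induction with
      | zero => exact Or.inl rfl
      | succ j ihj =>
        right
        rcases ihj with e | hlt
        · rw [← e]; exact (hcov j).1
        · exact causal_trans hlt (hcov j).1
    rcases key (Fin.last (n + 1)) with e | hlt
    · exact absurd e (by simp [Fin.ext_iff])
    · rwa [h0, hl] at hlt
  · intro h
    exact trans_to_path u v (causal_to_trans ((v 0 - u 0).toNat) u v hu hv h le_rfl)
end

section
/- Let P be a finite partially ordered set that is covariant, i.e., for all u, v ∈ P, height(u) < height(v) implies u < v, where height(v) is the length of the longest chain in P terminating at v. Then P is weakly covariant: for any u < v in P, every saturated chain u = w₁ ⋖ w₂ ⋖ ⋯ ⋖ wₙ = v (each step a covering relation of P) has length n − 1 = height(v) − height(u); in particular any two such chains between u and v have the same length. -/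
lemma height_lt_top_of_fintype {α : Type*} [Fintype α] [PartialOrder α] (x : α) :
    Order.height x < ⊤ := by
  have h : Order.height x ≤ (Fintype.card α : ℕ∞) :=
    Order.height_le fun p _ => by exact_mod_cast p.length_lt_card.le
  exact lt_of_le_of_lt h (WithTop.coe_lt_top _)

lemma height_covby {α : Type*} [Fintype α] [PartialOrder α]
    (hcov : ∀ u v : α, Order.height u < Order.height v → u < v)
    {a b : α} (hab : a ⋖ b) :
    Order.height b = Order.height a + 1 := by
  have hlt : Order.height a < Order.height b :=
    Order.height_strictMono hab.lt (height_lt_top_of_fintype a)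
  lift Order.height a to ℕ using (height_lt_top_of_fintype a).ne with k hk
  lift Order.height b to ℕ using (height_lt_top_of_fintype b).ne with m hm
  have hkm : k < m := by exact_mod_cast hlt
  by_contra hne
  have hm2 : k + 2 ≤ m := by
    rcases Nat.lt_or_ge m (k + 2) with h | h
    · exact absurd (by omega : m = k + 1) (fun h' => hne (by rw [h']; push_cast; ring))
    · exact h
  -- m = (m-1) + 1 with m-1 ≥ k+1
  have hb' : Order.height b = ((m - 1 : ℕ) : ℕ∞) + 1 := by
    rw [← hm]; norm_cast; omega
  obtain ⟨_, ⟨y, hyb, hy⟩, -⟩ := Order.height_eq_coe_add_one_iff.mp hb'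
  have hay : Order.height a < Order.height y := by
    rw [← hk, hy]; exact_mod_cast (by omega : k < m - 1)
  exact hab.2 (hcov a y hay) hyb

/-- A covariant causet is weakly covariant: in a finite poset where
`height u < height v` implies `u < v`, every saturated chain of covering
steps from `u` to `v` has length `height v − height u`. -/
theorem stmt11 {α : Type*} [Fintype α] [PartialOrder α]
    (hcov : ∀ u v : α, Order.height u < Order.height v → u < v)
    (u v : α) (huv : u < v) (n : ℕ) (w : Fin (n + 2) → α)
    (h0 : w 0 = u) (hl : w (Fin.last (n + 1)) = v)
    (hstep : ∀ i : Fin (n + 1), w i.castSucc ⋖ w i.succ) :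
    Order.height u + ((n : ℕ∞) + 1) = Order.height v := by
  have key : ∀ i : Fin (n + 2), Order.height (w i) = Order.height u + (i : ℕ) := by
    intro i
    induction i using Fin.induction with
    | zero => simp [h0]
    | succ i ih =>
      rw [height_covby hcov (hstep i), ih]
      have : ((i.succ : ℕ) : ℕ∞) = ((i.castSucc : ℕ) : ℕ∞) + 1 := by
        simp [Fin.val_succ]
      rw [this, add_assoc]
  have := key (Fin.last (n + 1))
  rw [hl] at this
  rw [this]
  simp [Fin.val_last]
end

section
/- Let Γ be a finite subset of a mass hyperboloid {p ∈ ℤ⁴ : Q₄(p) = m²} and let x, y ∈ ℤ⁴. For every n ∈ ℕ and every symmetric function f : Γⁿ → ℂ, the commutator of the annihilation and creation fields (with all momentum sums taken over Γ) is the scalar operator φ(x)(ψ(y)f) − ψ(y)(φ(x)f) = (Σ_{p∈Γ} e^{i p·(y−x)}) · f. This is the paper's Theorem 5.2, [φ(x),ψ(y)] = Σ_{p∈Γ_m} e^{ip·(y−x)} I. -/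
/-- The Minkowski pairing `p·y = ½(Q₄(p+y) − Q₄(p) − Q₄(y))`. -/
noncomputable def mpair (p y : Fin 4 → ℤ) : ℝ :=
  ((Q4 (p + y) - Q4 p - Q4 y : ℤ) : ℝ) / 2

/-- The annihilation field `φ(x)` on the Fock space over a finite momentum set
`Γ`, modelled on functions of finite momentum lists:
`(φ(x)f)(p₁,…,pₙ) = √(n+1) Σ_{p∈Γ} e^{−i p·x} f(p,p₁,…,pₙ)`. -/
noncomputable def phiL (Γ : Finset (Fin 4 → ℤ)) (x : Fin 4 → ℤ)
    (f : List {p // p ∈ Γ} → ℂ) : List {p // p ∈ Γ} → ℂ :=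
  fun l => (Real.sqrt (l.length + 1) : ℂ) *
    ∑ p : {p // p ∈ Γ}, Complex.exp (-Complex.I * (mpair p.1 x : ℂ)) * f (p :: l)

/-- The creation field `ψ(x)` on the Fock space over a finite momentum set `Γ`:
`(ψ(x)g)(p₁,…,p_{n+1}) = (n+1)^{−1/2} Σ_j e^{i pⱼ·x} g(p₁,…,p̂ⱼ,…,p_{n+1})`. -/
noncomputable def psiL (Γ : Finset (Fin 4 → ℤ)) (x : Fin 4 → ℤ)
    (f : List {p // p ∈ Γ} → ℂ) : List {p // p ∈ Γ} → ℂ :=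
  fun l => (1 / Real.sqrt l.length : ℂ) *
    ∑ j : Fin l.length,
      Complex.exp (Complex.I * (mpair (l.get j).1 x : ℂ)) * f (l.eraseIdx j)


lemma mpair_sub (p x y : Fin 4 → ℤ) : mpair p (y - x) = mpair p y - mpair p x := by
  have h : Q4 (p + (y - x)) - Q4 p - Q4 (y - x)
      = (Q4 (p + y) - Q4 p - Q4 y) - (Q4 (p + x) - Q4 p - Q4 x) := by
    simp only [Q4, Pi.add_apply, Pi.sub_apply]; ring
  unfold mpair
  rw [h]; push_cast; ring

lemma cons_sum {Γ : Finset (Fin 4 → ℤ)} (y : Fin 4 → ℤ) (g : List {p // p ∈ Γ} → ℂ)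
    (p : {p // p ∈ Γ}) (l : List {p // p ∈ Γ}) :
    (∑ j : Fin (l.length + 1),
        Complex.exp (Complex.I * (mpair ((p :: l).get j).1 y : ℂ)) * g ((p :: l).eraseIdx j))
    = Complex.exp (Complex.I * (mpair p.1 y : ℂ)) * g l
      + ∑ j : Fin l.length,
          Complex.exp (Complex.I * (mpair (l.get j).1 y : ℂ)) * g (p :: l.eraseIdx j) := by
  rw [Fin.sum_univ_succ]
  rfl

lemma phi_psi (Γ : Finset (Fin 4 → ℤ)) (x y : Fin 4 → ℤ)
    (f : List {p // p ∈ Γ} → ℂ) (l : List {p // p ∈ Γ}) :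
    phiL Γ x (psiL Γ y f) l
      = (∑ p : {p // p ∈ Γ}, Complex.exp (-Complex.I * (mpair p.1 x : ℂ))
            * Complex.exp (Complex.I * (mpair p.1 y : ℂ))) * f l
        + ∑ p : {p // p ∈ Γ}, ∑ j : Fin l.length,
            Complex.exp (-Complex.I * (mpair p.1 x : ℂ))
              * Complex.exp (Complex.I * (mpair (l.get j).1 y : ℂ))
              * f (p :: l.eraseIdx j) := by
  have h0 : ((l.length + 1 : ℕ) : ℝ) = (l.length : ℝ) + 1 := by push_cast; ring
  have hpos : (0 : ℝ) < (l.length : ℝ) + 1 := by positivity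
  have hcancel : ((Real.sqrt ((l.length : ℝ) + 1) : ℝ) : ℂ)
      * (1 / ((Real.sqrt (((l.length + 1 : ℕ)) : ℝ) : ℝ) : ℂ)) = 1 := by
    rw [h0, mul_one_div, div_self]
    exact Complex.ofReal_ne_zero.mpr (ne_of_gt (Real.sqrt_pos.mpr hpos))
  unfold phiL psiL
  simp only [cons_sum, List.length_cons]
  rw [Finset.mul_sum, Finset.sum_mul, ← Finset.sum_add_distrib]
  refine Finset.sum_congr rfl fun p _ => ?_
  set A := Complex.exp (-Complex.I * (mpair p.1 x : ℂ))
  set B := Complex.exp (Complex.I * (mpair p.1 y : ℂ))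
  set T := ∑ j : Fin l.length,
      Complex.exp (Complex.I * (mpair (l.get j).1 y : ℂ)) * f (p :: l.eraseIdx j) with hT
  have h2 : ∑ j : Fin l.length,
      A * Complex.exp (Complex.I * (mpair (l.get j).1 y : ℂ))
        * f (p :: l.eraseIdx j) = A * T := by
    rw [hT, Finset.mul_sum]
    exact Finset.sum_congr rfl fun j _ => by ring
  rw [h2]
  linear_combination (A * (B * f l + T)) * hcancel

lemma psi_phi (Γ : Finset (Fin 4 → ℤ)) (x y : Fin 4 → ℤ)
    (f : List {p // p ∈ Γ} → ℂ) (l : List {p // p ∈ Γ}) :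
    psiL Γ y (phiL Γ x f) l
      = ∑ j : Fin l.length, ∑ p : {p // p ∈ Γ},
          Complex.exp (-Complex.I * (mpair p.1 x : ℂ))
            * Complex.exp (Complex.I * (mpair (l.get j).1 y : ℂ))
            * f (p :: l.eraseIdx j) := by
  unfold phiL psiL
  rw [Finset.mul_sum]
  refine Finset.sum_congr rfl fun j _ => ?_
  have hpos : 0 < l.length := j.pos
  have hlen : (((l.eraseIdx (j : ℕ)).length : ℝ) + 1) = ((l.length : ℕ) : ℝ) := by
    rw [List.length_eraseIdx, if_pos j.isLt, Nat.cast_sub hpos]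
    push_cast
    ring
  simp only [phiL, psiL] at *
  rw [hlen]
  have hcancel : (1 / ((Real.sqrt ((l.length : ℕ) : ℝ) : ℝ) : ℂ))
      * ((Real.sqrt ((l.length : ℕ) : ℝ) : ℝ) : ℂ) = 1 := by
    rw [one_div, inv_mul_cancel₀]
    exact Complex.ofReal_ne_zero.mpr
      (ne_of_gt (Real.sqrt_pos.mpr (by exact_mod_cast hpos)))
  set C := Complex.exp (Complex.I * (mpair (l.get j).1 y : ℂ))
  set S := ∑ p : {p // p ∈ Γ},
      Complex.exp (-Complex.I * (mpair p.1 x : ℂ)) * f (p :: l.eraseIdx (j : ℕ)) with hS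
  have h2 : ∑ p : {p // p ∈ Γ},
      Complex.exp (-Complex.I * (mpair p.1 x : ℂ)) * C * f (p :: l.eraseIdx (j : ℕ))
      = C * S := by
    rw [hS, Finset.mul_sum]
    exact Finset.sum_congr rfl fun p _ => by ring
  rw [h2]
  linear_combination (C * S) * hcancel

/-- Theorem 5.2: on the Fock space over a finite subset `Γ` of the mass
hyperboloid, `[φ(x), ψ(y)] = (Σ_{p∈Γ} e^{i p·(y−x)}) I`. -/
theorem stmt17 (m2 : ℤ) (Γ : Finset (Fin 4 → ℤ)) (hΓ : ∀ p ∈ Γ, Q4 p = m2)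
    (x y : Fin 4 → ℤ) (f : List {p // p ∈ Γ} → ℂ)
    (hsym : ∀ l l' : List {p // p ∈ Γ}, l.Perm l' → f l = f l')
    (l : List {p // p ∈ Γ}) :
    phiL Γ x (psiL Γ y f) l - psiL Γ y (phiL Γ x f) l
      = (∑ p : {p // p ∈ Γ}, Complex.exp (Complex.I * (mpair p.1 (y - x) : ℂ))) * f l := by

  rw [phi_psi, psi_phi, Finset.sum_comm]
  rw [add_sub_cancel_right]
  rw [show (∑ p : {p // p ∈ Γ}, Complex.exp (-Complex.I * (mpair p.1 x : ℂ))
      * Complex.exp (Complex.I * (mpair p.1 y : ℂ)))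
      = ∑ p : {p // p ∈ Γ}, Complex.exp (Complex.I * (mpair p.1 (y - x) : ℂ)) from
    Finset.sum_congr rfl fun p _ => by
      rw [← Complex.exp_add]
      congr 1
      rw [mpair_sub]
      push_cast
      ring]
end
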